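/- arXiv:1303.0377 — 8 statements merged into one kernel-verified Lean document; each statement's English description precedes it below -/
import Mathlib

section
/- For all real α > 1, setting q = 2 - 1/α and β = c = q^α·2^(α-1), we have q^α - β·α·q + β·(α-1) ≤ 0. -/
open Real

lemma one_le_two_rpow_sub_one_mul {α : ℝ} (hα : 1 ≤ α) : 1 ≤ 2 ^ (α - 1) * α :=
  one_le_mul_of_one_le_of_one_le (one_le_rpow (by norm_num) (by linarith)) hα

lemma mul_two_sub_inv_sub_sub_one {α : ℝ} (hα : α ≠ 0) : α * (2 - 1 / α) - (α - 1) = α := by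
  field_simp
  ring

theorem stmt2_general (α q β : ℝ) (hα : 1 < α)
    (hq : q = 2 - 1/α) (hβ : β = q ^ α * 2 ^ (α - 1)) :
    q ^ α - β * α * q + β * (α - 1) ≤ 0 := by
  have hq_pos : 0 < q := by
    rw [hq, sub_pos]
    exact (div_lt_one (by linarith)).2 hα |>.trans one_lt_two
  have hlinear : β * α * q - β * (α - 1) = β * α := by
    rw [mul_assoc, ← mul_sub, hq, mul_two_sub_inv_sub_sub_one (by positivity)]
  have hpow_le : q ^ α ≤ β * α := by
    rw [hβ, mul_assoc]
    exact le_mul_of_one_le_right (by positivity) (one_le_two_rpow_sub_one_mul hα.le)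
  linarith

theorem stmt2 (α q β c : ℝ) (hα : 1 < α)
    (hq : q = 2 - 1/α) (hβ : β = q ^ α * 2 ^ (α - 1)) (hc : c = q ^ α * 2 ^ (α - 1)) :
    q ^ α - β * α * q + β * (α - 1) ≤ 0 :=
  stmt2_general α q β hα hq hβ
end

section
/- For all real α > 1 and c = (2-1/α)^α·2^(α-1), and all real x ≥ 0: c·x^α + (c-1)·α - c·x ≥ 0. -/
/-! Bernoulli's inequality gives `x ^ α - x ≥ 1 - α` for `x ≥ 0`, so the left-hand side is at
least `c (1 - α) + (c - 1) α = c - α`; Bernoulli again gives `(2 - 1/α) ^ α ≥ α`, hence `c ≥ α`. -/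

open Real

lemma one_sub_le_rpow_sub_self {x p : ℝ} (hx : 0 ≤ x) (hp : 1 ≤ p) : 1 - p ≤ x ^ p - x := by
  have bernoulli : 1 + p * (x - 1) ≤ x ^ p := by
    simpa using one_add_mul_self_le_rpow_one_add (by linarith : (-1 : ℝ) ≤ x - 1) hp
  nlinarith

lemma self_le_two_sub_one_div_rpow {α : ℝ} (hα : 1 ≤ α) : α ≤ (2 - 1 / α) ^ α := by
  have hinv : 1 / α ≤ 1 := (div_le_one (by linarith)).2 hα
  calc α = 1 + α * (1 - 1 / α) := by field_simp; ring
    _ ≤ (1 + (1 - 1 / α)) ^ α := one_add_mul_self_le_rpow_one_add (by linarith) hα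
    _ = (2 - 1 / α) ^ α := by ring_nf

lemma self_le_two_sub_one_div_rpow_mul_two_rpow {α : ℝ} (hα : 1 ≤ α) :
    α ≤ (2 - 1 / α) ^ α * 2 ^ (α - 1) := by
  have hpow : 1 ≤ (2 : ℝ) ^ (α - 1) := one_le_rpow (by norm_num) (by linarith)
  calc α ≤ (2 - 1 / α) ^ α := self_le_two_sub_one_div_rpow hα
    _ ≤ (2 - 1 / α) ^ α * 2 ^ (α - 1) :=
      le_mul_of_one_le_right (by linarith [self_le_two_sub_one_div_rpow hα]) hpow

theorem stmt3 (α c : ℝ) (hα : 1 < α) (hc : c = (2 - 1/α) ^ α * 2 ^ (α - 1)) :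
    ∀ x : ℝ, 0 ≤ x → 0 ≤ c * x ^ α + (c - 1) * α - c * x := by
  intro x hx
  have hαc : α ≤ c := hc ▸ self_le_two_sub_one_div_rpow_mul_two_rpow hα.le
  calc 0 ≤ c - α := by linarith
    _ = c * (1 - α) + (c - 1) * α := by ring
    _ ≤ c * (x ^ α - x) + (c - 1) * α := by
      gcongr c * ?_ + _
      · linarith
      · exact one_sub_le_rpow_sub_self hx hα.le
    _ = c * x ^ α + (c - 1) * α - c * x := by ring
end

section
/- For all real α > 1, with q = 2 - 1/α, β = c = q^α·2^(α-1), and for all real x with 0 ≤ x ≤ 1 and y with 0 ≤ y ≤ 1: q^α·y^α·(1+x)^α - β·q·(1+x)·y + β·x·y ≤ c·x^α·y^α + (c-1)·(α-1). -/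
/-!
Write `P = (1+x)^α`, `X = x^α`, `Y = y^α`, `T = 2^(α-1)`, so `β = c = q^α T`. By the power-mean
inequality and `1 + x ≥ 2x`, the gap `P - T X` lies in `[0, T]`, hence
`Y (P - T X) ≤ y (P - T X) ≤ T y`. Multiplying by `q^α` and using `q ≥ 1` bounds the left-hand side
by `c X Y` already; the term `(c-1)(α-1)` is nonnegative slack.
-/

open Real
open scoped NNReal

theorem Real.rpow_add_le_mul_rpow_add_rpow {a b p : ℝ} (ha : 0 ≤ a) (hb : 0 ≤ b) (hp : 1 ≤ p) :
    (a + b) ^ p ≤ 2 ^ (p - 1) * (a ^ p + b ^ p) := by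
  lift a to ℝ≥0 using ha
  lift b to ℝ≥0 using hb
  exact_mod_cast NNReal.rpow_add_le_mul_rpow_add_rpow a b hp

theorem two_rpow_sub_one_mul_rpow_le_one_add_rpow {x p : ℝ} (hx₀ : 0 ≤ x) (hx₁ : x ≤ 1)
    (hp : 0 ≤ p) : 2 ^ (p - 1) * x ^ p ≤ (1 + x) ^ p :=
  calc 2 ^ (p - 1) * x ^ p ≤ 2 ^ p * x ^ p := by
        gcongr
        · exact one_le_two
        · linarith
    _ = (2 * x) ^ p := (mul_rpow zero_le_two hx₀).symm
    _ ≤ (1 + x) ^ p := rpow_le_rpow (by positivity) (by linarith) hp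

theorem rpow_mul_one_add_rpow_sub_le {α x y : ℝ} (hα : 1 ≤ α) (hx₀ : 0 ≤ x) (hx₁ : x ≤ 1)
    (hy₀ : 0 ≤ y) (hy₁ : y ≤ 1) :
    y ^ α * ((1 + x) ^ α - 2 ^ (α - 1) * x ^ α) ≤ 2 ^ (α - 1) * y := by
  have hgap₀ : 0 ≤ (1 + x) ^ α - 2 ^ (α - 1) * x ^ α :=
    sub_nonneg.2 (two_rpow_sub_one_mul_rpow_le_one_add_rpow hx₀ hx₁ (by linarith))
  have hgap₁ : (1 + x) ^ α - 2 ^ (α - 1) * x ^ α ≤ 2 ^ (α - 1) := by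
    have := Real.rpow_add_le_mul_rpow_add_rpow zero_le_one hx₀ hα
    rw [one_rpow] at this
    linarith
  calc y ^ α * ((1 + x) ^ α - 2 ^ (α - 1) * x ^ α)
      ≤ y * ((1 + x) ^ α - 2 ^ (α - 1) * x ^ α) :=
        mul_le_mul_of_nonneg_right (rpow_le_self_of_le_one hy₀ hy₁ hα) hgap₀
    _ ≤ y * 2 ^ (α - 1) := mul_le_mul_of_nonneg_left hgap₁ hy₀
    _ = 2 ^ (α - 1) * y := mul_comm _ _

theorem stmt5 (α q β c : ℝ) (hα : 1 < α)
    (hq : q = 2 - 1/α) (hβ : β = q ^ α * 2 ^ (α - 1)) (hc : c = q ^ α * 2 ^ (α - 1)) :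
    ∀ x y : ℝ, 0 ≤ x → x ≤ 1 → 0 ≤ y → y ≤ 1 →
      q ^ α * y ^ α * (1 + x) ^ α - β * q * (1 + x) * y + β * x * y ≤
        c * x ^ α * y ^ α + (c - 1) * (α - 1) := by
  intro x y hx₀ hx₁ hy₀ hy₁
  subst hβ hc
  have hq₁ : 1 ≤ q := by
    have : 1 / α < 1 := (div_lt_one (by linarith)).2 hα
    linarith
  have hQ : 1 ≤ q ^ α := one_le_rpow hq₁ (by linarith)
  have hT : 1 ≤ (2 : ℝ) ^ (α - 1) := one_le_rpow one_le_two (by linarith)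
  have key := rpow_mul_one_add_rpow_sub_le hα.le hx₀ hx₁ hy₀ hy₁
  have hdrop : 0 ≤ q ^ α * 2 ^ (α - 1) * y * (q - 1) * (1 + x) := by
    have hc₀ : 0 ≤ q ^ α * 2 ^ (α - 1) := by positivity
    exact mul_nonneg (mul_nonneg (mul_nonneg hc₀ hy₀) (by linarith)) (by linarith)
  have hslack : 0 ≤ (q ^ α * 2 ^ (α - 1) - 1) * (α - 1) :=
    mul_nonneg (by nlinarith) (by linarith)
  linear_combination q ^ α * key + hdrop + hslack
end

section
/- For all real α > 1, q = 2 - 1/α, β = c = q^α·2^(α-1), and 0 ≤ y ≤ 1: q^α·y^α·2^(α-1) - β·q·y - (c-1)·(α-1) ≤ 0. -/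
/-!
No convexity argument is needed: the inequality holds termwise, since `y ^ α ≤ y ≤ q * y` for
`y ∈ [0, 1]` when `α, q ≥ 1`, and `c = q ^ α * 2 ^ (α - 1) ≥ 1` makes `(c - 1) * (α - 1)` nonnegative.
-/

open Real

theorem mul_rpow_sub_mul_mul_sub_mul_nonpos {α q c y : ℝ} (hα : 1 ≤ α) (hq : 1 ≤ q)
    (hc : 1 ≤ c) (hy₀ : 0 ≤ y) (hy₁ : y ≤ 1) :
    c * y ^ α - c * q * y - (c - 1) * (α - 1) ≤ 0 := by
  have hc₀ : 0 ≤ c := zero_le_one.trans hc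
  have hyα : y ^ α ≤ q * y :=
    (rpow_le_self_of_le_one hy₀ hy₁ hα).trans (le_mul_of_one_le_left hy₀ hq)
  have hmain : c * y ^ α ≤ c * q * y := by
    rw [mul_assoc]; exact mul_le_mul_of_nonneg_left hyα hc₀
  nlinarith [mul_nonneg (sub_nonneg.2 hc) (sub_nonneg.2 hα)]

theorem one_le_two_sub_one_div {α : ℝ} (hα : 1 ≤ α) : 1 ≤ 2 - 1 / α := by
  have : 1 / α ≤ 1 := (div_le_one (by linarith)).2 hα
  linarith

theorem stmt6 (α q β c : ℝ) (hα : 1 < α)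
    (hq : q = 2 - 1/α) (hβ : β = q ^ α * 2 ^ (α - 1)) (hc : c = q ^ α * 2 ^ (α - 1)) :
    ∀ y : ℝ, 0 ≤ y → y ≤ 1 →
      q ^ α * y ^ α * 2 ^ (α - 1) - β * q * y - (c - 1) * (α - 1) ≤ 0 := by
  intro y hy₀ hy₁
  have hq₁ : 1 ≤ q := hq ▸ one_le_two_sub_one_div hα.le
  have hc₁ : 1 ≤ c := hc ▸ one_le_mul_of_one_le_of_one_le
    (one_le_rpow hq₁ (by linarith)) (one_le_rpow one_le_two (by linarith))
  have hlhs : q ^ α * y ^ α * 2 ^ (α - 1) = c * y ^ α := by rw [hc]; ring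
  rw [hlhs, hβ, ← hc]
  exact mul_rpow_sub_mul_mul_sub_mul_nonpos hα.le hq₁ hc₁ hy₀ hy₁
end

section
/- For all real α > 1, q = 2 - 1/α, and β = q^α·2^(α-1): q^α·(1 - α·2^(α-1)) + α - 1 ≤ 0. -/
/-! Since `q ≥ 1` and `α · 2^(α-1) ≥ α ≥ 1`, the factor `1 - α · 2^(α-1)` is nonpositive, so
multiplying it by `q^α ≥ 1` only lowers it: the left side is at most `α - α · 2^(α-1) ≤ 0`. -/

open Real

lemma rpow_mul_one_sub_mul_rpow_add_sub_one_nonpos {b q α : ℝ} (hb : 1 ≤ b) (hq : 1 ≤ q)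
    (hα : 1 ≤ α) : q ^ α * (1 - α * b ^ (α - 1)) + α - 1 ≤ 0 := by
  have hα_le : α ≤ α * b ^ (α - 1) :=
    le_mul_of_one_le_right (by linarith) (one_le_rpow hb (by linarith))
  have hfactor : 1 - α * b ^ (α - 1) ≤ 0 := by linarith
  have hqα : 1 ≤ q ^ α := one_le_rpow hq (by linarith)
  calc q ^ α * (1 - α * b ^ (α - 1)) + α - 1
      ≤ 1 * (1 - α * b ^ (α - 1)) + α - 1 := by
        gcongr ?_ + α - 1
        exact mul_le_mul_of_nonpos_right hqα hfactor
    _ = α - α * b ^ (α - 1) := by ring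
    _ ≤ 0 := by linarith

theorem stmt8_general (α q : ℝ) (hα : 1 < α)
    (hq : q = 2 - 1/α) :
    q ^ α * (1 - α * 2 ^ (α - 1)) + α - 1 ≤ 0 := by
  have hq_ge : 1 ≤ q := by
    have : 1 / α ≤ 1 := (div_le_one (by linarith)).mpr hα.le
    linarith
  exact rpow_mul_one_sub_mul_rpow_add_sub_one_nonpos one_le_two hq_ge hα.le

theorem stmt8 (α q β : ℝ) (hα : 1 < α)
    (hq : q = 2 - 1/α) (hβ : β = q ^ α * 2 ^ (α - 1)) :
    q ^ α * (1 - α * 2 ^ (α - 1)) + α - 1 ≤ 0 :=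
  stmt8_general α q hα hq
end

section
/- For all real α > 1, q = 2 - 1/α, β = q^α·2^(α-1), and all real x ≥ 1: q^α·(1+x)^α - β·α·q·(1+x)·x^(α-1) + β·(α-1)·x^α + α - 1 ≤ 0. -/
/-!
Convexity of `t ↦ t ^ α` gives `(1 + x) ^ α ≤ x ^ α + α (1 + x) ^ (α - 1)`, and
`1 + x ≤ 2x` bounds the last power by `2 ^ (α - 1) x ^ (α - 1)`. After this substitution,
using `α q = 2α - 1` and `x · x ^ (α - 1) = x ^ α`, the left-hand side becomes
`-(q ^ α x ^ α - 1)(α 2 ^ (α - 1) - 1) - β α x ^ (α - 1) (q - 1) - α (2 ^ (α - 1) - 1)`,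
a sum of three nonpositive terms since `q ^ α, x ^ α, 2 ^ (α - 1) ≥ 1`.
-/

open Real

theorem rpow_sub_rpow_le_mul_rpow_sub_one {a b p : ℝ} (ha : 0 ≤ a) (hab : a ≤ b) (hp : 1 ≤ p) :
    b ^ p - a ^ p ≤ p * b ^ (p - 1) * (b - a) := by
  rcases hab.eq_or_lt with rfl | hab
  · simp
  have hb : 0 < b := ha.trans_lt hab
  have bernoulli : 1 + p * (a / b - 1) ≤ (a / b) ^ p := by
    simpa using one_add_mul_self_le_rpow_one_add (s := a / b - 1)
      (by linarith [div_nonneg ha hb.le]) hp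
  rw [div_rpow ha hb.le, le_div_iff₀ (rpow_pos_of_pos hb p)] at bernoulli
  have hbp : b ^ p = b ^ (p - 1) * b := by rw [← rpow_add_one hb.ne']; ring_nf
  have hba : b * (a / b) = a := by field_simp
  rw [hbp] at bernoulli ⊢
  linear_combination bernoulli - p * b ^ (p - 1) * hba

theorem one_add_rpow_le_two_rpow_mul_rpow {x p : ℝ} (hx : 1 ≤ x) (hp : 0 ≤ p) :
    (1 + x) ^ p ≤ 2 ^ p * x ^ p := by
  rw [← mul_rpow zero_le_two (by linarith)]
  exact rpow_le_rpow (by linarith) (by linarith) hp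

theorem stmt9 (α q β : ℝ) (hα : 1 < α)
    (hq : q = 2 - 1/α) (hβ : β = q ^ α * 2 ^ (α - 1)) :
    ∀ x : ℝ, 1 ≤ x →
      q ^ α * (1 + x) ^ α - β * α * q * (1 + x) * x ^ (α - 1) + β * (α - 1) * x ^ α
        + α - 1 ≤ 0 := by
  intro x hx
  have hαq : α * q = 2 * α - 1 := by rw [hq]; field_simp
  have hq1 : 1 ≤ q := by rw [hq]; linarith [(div_le_one₀ (by linarith : (0 : ℝ) < α)).2 hα.le]
  have hxx : x * x ^ (α - 1) = x ^ α := by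
    rw [mul_comm, ← rpow_add_one (by positivity)]; ring_nf
  have hconvex : (1 + x) ^ α ≤ x ^ α + α * (2 ^ (α - 1) * x ^ (α - 1)) :=
    calc (1 + x) ^ α ≤ x ^ α + α * (1 + x) ^ (α - 1) := by
          linarith [rpow_sub_rpow_le_mul_rpow_sub_one (a := x) (b := 1 + x)
            (by positivity) (by linarith) hα.le]
      _ ≤ x ^ α + α * (2 ^ (α - 1) * x ^ (α - 1)) := by
          gcongr; exact one_add_rpow_le_two_rpow_mul_rpow hx (by linarith)
  have hqα : 1 ≤ q ^ α := one_le_rpow hq1 (by linarith)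
  have hT : 1 ≤ (2 : ℝ) ^ (α - 1) := one_le_rpow one_le_two (by linarith)
  have hX : 1 ≤ x ^ α := one_le_rpow hx (by linarith)
  calc q ^ α * (1 + x) ^ α - β * α * q * (1 + x) * x ^ (α - 1) + β * (α - 1) * x ^ α + α - 1
      ≤ q ^ α * (x ^ α + α * (2 ^ (α - 1) * x ^ (α - 1))) - β * α * q * (1 + x) * x ^ (α - 1)
          + β * (α - 1) * x ^ α + α - 1 := by gcongr
    _ = -((q ^ α * x ^ α - 1) * (α * 2 ^ (α - 1) - 1))
          - q ^ α * 2 ^ (α - 1) * α * x ^ (α - 1) * (q - 1) - α * (2 ^ (α - 1) - 1) := by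
        rw [hβ]
        linear_combination (-(q ^ α * 2 ^ (α - 1) * α * q)) * hxx
          - q ^ α * 2 ^ (α - 1) * x ^ α * hαq
    _ ≤ 0 := by
        have h₁ : 0 ≤ (q ^ α * x ^ α - 1) * (α * 2 ^ (α - 1) - 1) :=
          mul_nonneg (by linarith [one_le_mul_of_one_le_of_one_le hqα hX])
            (by linarith [one_le_mul_of_one_le_of_one_le hα.le hT])
        have h₂ : 0 ≤ q ^ α * 2 ^ (α - 1) * α * x ^ (α - 1) * (q - 1) := by
          have := sub_nonneg.2 hq1; positivity
        have h₃ : 0 ≤ α * (2 ^ (α - 1) - 1) := mul_nonneg (by linarith) (by linarith)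
        linarith
end

section
/- For all real α > 1, q = 2 - 1/α, and β = q^α·2^(α-1): q^α - β·q + α - 1 ≤ 0. -/
/-! Write `q = (2α - 1)/α`. Since `q ≥ 1` we have `q ^ α ≥ 1`, so it suffices that
`2 ^ (α - 1) * q ≥ α`, i.e. `2 ^ (α - 1) (2α - 1) ≥ α²`. This follows from the tangent line bound
`2 ^ t ≥ 1 + t log 2` at `t = α - 1` together with `log 2 > 1/2`. -/

open Real

lemma one_add_log_mul_le_rpow {a : ℝ} (ha : 0 < a) (t : ℝ) : 1 + log a * t ≤ a ^ t := by
  rw [rpow_def_of_pos ha]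
  linarith [add_one_le_exp (log a * t)]

lemma sq_le_two_rpow_sub_one_mul {α : ℝ} (hα : 1 ≤ α) :
    α ^ 2 ≤ 2 ^ (α - 1) * (2 * α - 1) := by
  have hlog : 1 / 2 < log 2 := log_two_gt_d9.trans_le' (by norm_num)
  have htangent := one_add_log_mul_le_rpow two_pos (α - 1)
  calc α ^ 2 ≤ (1 + log 2 * (α - 1)) * (2 * α - 1) := by
        nlinarith [mul_nonneg (sub_nonneg.2 hα) (sub_nonneg.2 hα)]
    _ ≤ 2 ^ (α - 1) * (2 * α - 1) := by gcongr; linarith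

lemma le_two_rpow_sub_one_mul_two_sub_inv {α : ℝ} (hα : 1 ≤ α) :
    α ≤ 2 ^ (α - 1) * (2 - 1 / α) := by
  have hα0 : 0 < α := by linarith
  rw [show 2 - 1 / α = (2 * α - 1) / α by field_simp, ← mul_div_assoc, le_div_iff₀ hα0]
  nlinarith [sq_le_two_rpow_sub_one_mul hα]

theorem stmt12 (α q β : ℝ) (hα : 1 < α)
    (hq : q = 2 - 1/α) (hβ : β = q ^ α * 2 ^ (α - 1)) :
    q ^ α - β * q + α - 1 ≤ 0 := by
  have hq1 : 1 ≤ q := by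
    rw [hq, le_sub_comm, div_le_iff₀ (by linarith)]
    linarith
  have hpow : 1 ≤ q ^ α := one_le_rpow hq1 (by linarith)
  have hkey : α ≤ 2 ^ (α - 1) * q := hq ▸ le_two_rpow_sub_one_mul_two_sub_inv hα.le
  calc q ^ α - β * q + α - 1 = α - 1 - q ^ α * (2 ^ (α - 1) * q - 1) := by rw [hβ]; ring
    _ ≤ α - 1 - 1 * (α - 1) := by gcongr
    _ = 0 := by ring
end

section
/- For all real α > 1, q = 2 - 1/α, and β = q^α·2^(α-1): q^α·2^α - 2·q·β + α - 1 ≤ 0. -/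
/-! Since `2 ^ (α - 1) = 2 ^ α / 2`, the left-hand side collapses to `(2q) ^ α (1 - q) + α - 1`,
and `α (1 - q) = 1 - α` by the choice of `q`. As `q ≥ 1`, it therefore suffices that
`(2q) ^ α ≥ α`, which follows from `(2q) ^ α ≥ 2 ^ α ≥ 1 + α` (Bernoulli). -/

open Real

lemma one_add_le_two_rpow {p : ℝ} (hp : 1 ≤ p) : 1 + p ≤ (2 : ℝ) ^ p := by
  simpa [one_add_one_eq_two] using
    one_add_mul_self_le_rpow_one_add (s := 1) (by norm_num) hp

lemma rpow_mul_rpow_sub_mul_rpow_sub_one {c q : ℝ} (α : ℝ) (hc : 0 < c) (hq : 0 ≤ q) :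
    q ^ α * c ^ α - c * q * (q ^ α * c ^ (α - 1)) = (c * q) ^ α * (1 - q) := by
  rw [rpow_sub hc, rpow_one, mul_rpow hc.le hq]
  field_simp

theorem stmt13 (α q β : ℝ) (hα : 1 < α)
    (hq : q = 2 - 1/α) (hβ : β = q ^ α * 2 ^ (α - 1)) :
    q ^ α * 2 ^ α - 2 * q * β + α - 1 ≤ 0 := by
  have hα0 : 0 < α := by linarith
  have hq1 : 1 ≤ q := by
    have : 1 / α < 1 := (div_lt_one hα0).mpr hα
    rw [hq]; linarith
  have hdefect : α * (1 - q) = 1 - α := by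
    rw [hq]; field_simp; ring
  have hgrowth : α ≤ (2 * q) ^ α := calc
    α ≤ 1 + α := by linarith
    _ ≤ 2 ^ α := one_add_le_two_rpow hα.le
    _ ≤ (2 * q) ^ α := rpow_le_rpow (by norm_num) (by linarith) hα0.le
  rw [hβ, rpow_mul_rpow_sub_mul_rpow_sub_one α two_pos (by linarith)]
  calc (2 * q) ^ α * (1 - q) + α - 1
      ≤ α * (1 - q) + α - 1 := by
        linarith [mul_le_mul_of_nonpos_right hgrowth (by linarith : 1 - q ≤ 0)]
    _ = 0 := by rw [hdefect]; ring
end
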